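/- arXiv:1709.05318 — 9 statements merged into one kernel-verified Lean document; each statement's English description precedes it below -/
import Mathlib

section
/- Let f : ℝ → ℝ be differentiable on a neighborhood of p* with f(p*) = 0, f' continuous at p*, and f'(p*) ≠ 0. Let η ∈ (0,1) and ζ ∈ (η,1). Then there exists ε > 0 with the following property: for any sequences (p_n), (F_n), (F'_n) of real numbers such that |p_0 − p*| ≤ ε, F'_n ≠ 0, p_{n+1} = p_n − F_n/F'_n, and 2·|F_n − f(p_n)| + |p_{n+1} − p_n|·|F'_n − f'(p_n)| ≤ η·|F_n| for all n, one has |p_{n+1} − p*| ≤ ζ·|p_n − p*| for all n; in particular p_n converges to p*. -/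
open Set Filter

/-- Local convergence of the inexact Newton iteration
`p_{n+1} = p_n - F_n / F'_n`, where `F_n` and `F'_n` are approximate
evaluations of `f(p_n)` and `f'(p_n)` satisfying
`2|F_n - f(p_n)| + |Δp_n|·|F'_n - f'(p_n)| ≤ η|F_n|`. -/
theorem inexact_newton_local_convergence
    (f f' : ℝ → ℝ) (pstar : ℝ)
    (hdiff : ∀ᶠ x in nhds pstar, HasDerivAt f (f' x) x)
    (hcont : ContinuousAt f' pstar)
    (hroot : f pstar = 0) (hne : f' pstar ≠ 0)
    (η ζ : ℝ) (hη : η ∈ Ioo (0 : ℝ) 1) (hζ : ζ ∈ Ioo η 1) :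
    ∃ ε > 0, ∀ p F F' : ℕ → ℝ,
      |p 0 - pstar| ≤ ε →
      (∀ n, F' n ≠ 0) →
      (∀ n, p (n + 1) = p n - F n / F' n) →
      (∀ n, 2 * |F n - f (p n)| + |p (n + 1) - p n| * |F' n - f' (p n)|
          ≤ η * |F n|) →
      (∀ n, |p (n + 1) - pstar| ≤ ζ * |p n - pstar|) ∧
        Tendsto p atTop (nhds pstar) := by
  obtain ⟨hη0, hη1⟩ := hη
  obtain ⟨hζη, hζ1⟩ := hζ
  have hζ0 : 0 < ζ := hη0.trans hζη
  set A := |f' pstar| with hAdef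
  have hA0 : 0 < A := abs_pos.mpr hne
  set δ := (ζ - η) * A / 4 with hδdef
  have hδ0 : 0 < δ := by
    have : 0 < ζ - η := by linarith
    positivity
  have hδA : δ ≤ A / 4 := by
    rw [hδdef]
    nlinarith
  -- key algebraic inequality
  have hkey : 2 * δ + η * (A + δ) ≤ ζ * (A - δ) := by
    rw [hδdef]; nlinarith
  -- get the ball
  have hδball : f' ⁻¹' Metric.closedBall (f' pstar) δ ∈ nhds pstar :=
    hcont (Metric.closedBall_mem_nhds _ hδ0)
  have hmem : {x | HasDerivAt f (f' x) x ∧ |f' x - f' pstar| ≤ δ} ∈ nhds pstar := by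
    filter_upwards [hdiff, hδball] with x h1 h2
    refine ⟨h1, ?_⟩
    simpa [Real.dist_eq] using h2
  obtain ⟨ε, hε0, hεsub⟩ := Metric.nhds_basis_closedBall.mem_iff.mp hmem
  refine ⟨ε, hε0, ?_⟩
  intro p F F' hp0 hF' hiter hcond
  set s := Metric.closedBall pstar ε with hsdef
  have hball : ∀ x ∈ s, HasDerivAt f (f' x) x ∧ |f' x - f' pstar| ≤ δ :=
    fun x hx => hεsub hx
  have hpstars : pstar ∈ s := Metric.mem_closedBall_self hε0.le
  have hderiv : ∀ x ∈ s, HasDerivWithinAt f (f' x) s x :=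
    fun x hx => ((hball x hx).1).hasDerivWithinAt
  -- bounds on f' within the ball
  have hflo : ∀ x ∈ s, A - δ ≤ |f' x| := by
    intro x hx
    have h := (hball x hx).2
    have := abs_sub_abs_le_abs_sub (f' pstar) (f' x)
    rw [abs_sub_comm] at this
    linarith
  have hfhi : ∀ x ∈ s, |f' x| ≤ A + δ := by
    intro x hx
    have h := (hball x hx).2
    have := abs_sub_abs_le_abs_sub (f' x) (f' pstar)
    linarith
  -- one-step contraction
  have step : ∀ n, |p n - pstar| ≤ ε → |p (n + 1) - pstar| ≤ ζ * |p n - pstar| := by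
    intro n hn
    set x := p n with hxdef
    set q := p (n + 1) with hqdef
    set Δ := q - x with hΔdef
    have hxs : x ∈ s := by
      rw [hsdef, Metric.mem_closedBall, Real.dist_eq]; exact hn
    -- F n + F' n * Δ = 0
    have hFΔ : F n + F' n * Δ = 0 := by
      rw [hΔdef, hqdef, hiter n]
      field_simp [hF' n]
      rw [hxdef]; ring
    -- |f x + f' x * Δ| ≤ η * |f x|
    have key1 : |f x + f' x * Δ| ≤ η * |f x| := by
      have heq : f x + f' x * Δ = (f x - F n) + (f' x - F' n) * Δ := by
        have : F n = -(F' n * Δ) := by linarith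
        rw [this]; ring
      have h1 : |f x + f' x * Δ| ≤ |F n - f x| + |Δ| * |F' n - f' x| := by
        rw [heq]
        calc |(f x - F n) + (f' x - F' n) * Δ| ≤ |f x - F n| + |(f' x - F' n) * Δ| :=
              abs_add_le _ _
          _ = |F n - f x| + |Δ| * |F' n - f' x| := by
              rw [abs_sub_comm, abs_mul, abs_sub_comm (f' x), mul_comm]
      have h2 := hcond n
      have h3 : |F n| ≤ |f x| + |F n - f x| := by
        calc |F n| = |f x + (F n - f x)| := by ring_nf
          _ ≤ |f x| + |F n - f x| := abs_add_le _ _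
      have h4 : 0 ≤ |F n - f x| := abs_nonneg _
      calc |f x + f' x * Δ| ≤ |F n - f x| + |Δ| * |F' n - f' x| := h1
        _ ≤ η * |F n| - |F n - f x| := by
            have : |Δ| * |F' n - f' x| = |p (n+1) - p n| * |F' n - f' (p n)| := rfl
            linarith [h2]
        _ ≤ η * |f x| := by nlinarith
    -- Taylor bound: |f x - f' x * (x - pstar)| ≤ 2δ |x - pstar|
    have taylor : |f x - f pstar - f' x * (x - pstar)| ≤ 2 * δ * |x - pstar| := by
      have hg : ∀ y ∈ s, HasDerivWithinAt (fun y => f y - f' x * y) (f' y - f' x) s y := by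
        intro y hy
        exact (hderiv y hy).sub (((hasDerivAt_id y).const_mul (f' x)).hasDerivWithinAt.congr_deriv
          (by ring))
      have hb : ∀ y ∈ s, ‖f' y - f' x‖ ≤ 2 * δ := by
        intro y hy
        have h1 := (hball y hy).2
        have h2 := (hball x hxs).2
        rw [Real.norm_eq_abs]
        calc |f' y - f' x| = |(f' y - f' pstar) - (f' x - f' pstar)| := by ring_nf
          _ ≤ |f' y - f' pstar| + |f' x - f' pstar| := abs_sub _ _
          _ ≤ 2 * δ := by linarith
      have := Convex.norm_image_sub_le_of_norm_hasDerivWithin_le hg hb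
        (convex_closedBall _ _) hpstars hxs
      simp only [Real.norm_eq_abs] at this
      calc |f x - f pstar - f' x * (x - pstar)|
          = |(f x - f' x * x) - (f pstar - f' x * pstar)| := by ring_nf
        _ ≤ 2 * δ * |x - pstar| := this
    -- |f x| ≤ (A + δ) |x - pstar|
    have hfx : |f x| ≤ (A + δ) * |x - pstar| := by
      have := Convex.norm_image_sub_le_of_norm_hasDerivWithin_le hderiv
        (fun y hy => by rw [Real.norm_eq_abs]; exact hfhi y hy)
        (convex_closedBall _ _) hpstars hxs
      simp only [Real.norm_eq_abs, hroot, sub_zero] at this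
      exact this
    -- main estimate
    have hmain : |f' x| * |q - pstar| ≤ ζ * (A - δ) * |x - pstar| := by
      have heq : f' x * (q - pstar) =
          (f' x * (x - pstar) - (f x - f pstar)) + (f x + f' x * Δ) := by
        rw [hroot, hΔdef]; ring
      calc |f' x| * |q - pstar| = |f' x * (q - pstar)| := (abs_mul _ _).symm
        _ ≤ |f' x * (x - pstar) - (f x - f pstar)| + |f x + f' x * Δ| := by
            rw [heq]; exact abs_add_le _ _
        _ ≤ 2 * δ * |x - pstar| + η * ((A + δ) * |x - pstar|) := by
            have h1 : |f' x * (x - pstar) - (f x - f pstar)| =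
                |f x - f pstar - f' x * (x - pstar)| := by rw [abs_sub_comm]
            have h2 : η * |f x| ≤ η * ((A + δ) * |x - pstar|) := by
              apply mul_le_mul_of_nonneg_left hfx hη0.le
            linarith [taylor, key1]
        _ ≤ ζ * (A - δ) * |x - pstar| := by nlinarith [abs_nonneg (x - pstar)]
    have hAδ : 0 < A - δ := by linarith
    have hlo := hflo x hxs
    have h5 : (A - δ) * |q - pstar| ≤ ζ * (A - δ) * |x - pstar| := by
      calc (A - δ) * |q - pstar| ≤ |f' x| * |q - pstar| :=
            mul_le_mul_of_nonneg_right hlo (abs_nonneg _)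
        _ ≤ ζ * (A - δ) * |x - pstar| := hmain
    nlinarith [abs_nonneg (q - pstar), abs_nonneg (x - pstar)]
  -- stay in the ball
  have hin : ∀ n, |p n - pstar| ≤ ε := by
    intro n
    induction n with
    | zero => exact hp0
    | succ k ih =>
        calc |p (k + 1) - pstar| ≤ ζ * |p k - pstar| := step k ih
          _ ≤ 1 * ε := by nlinarith [abs_nonneg (p k - pstar)]
          _ = ε := one_mul ε
  have hcontr : ∀ n, |p (n + 1) - pstar| ≤ ζ * |p n - pstar| := fun n => step n (hin n)
  refine ⟨hcontr, ?_⟩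
  have hgeo : ∀ n, |p n - pstar| ≤ ζ ^ n * ε := by
    intro n
    induction n with
    | zero => simpa using hp0
    | succ k ih =>
        calc |p (k + 1) - pstar| ≤ ζ * |p k - pstar| := hcontr k
          _ ≤ ζ * (ζ ^ k * ε) := mul_le_mul_of_nonneg_left ih hζ0.le
          _ = ζ ^ (k + 1) * ε := by ring
  have htend : Tendsto (fun n : ℕ => ζ ^ n * ε) atTop (nhds 0) := by
    have := tendsto_pow_atTop_nhds_zero_of_lt_one hζ0.le hζ1
    simpa using this.mul_const ε
  have habs : Tendsto (fun n => |p n - pstar|) atTop (nhds 0) :=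
    squeeze_zero (fun n => abs_nonneg _) hgeo htend
  rw [tendsto_iff_dist_tendsto_zero]
  simpa [Real.dist_eq] using habs
end

section
/- Let f_l, f_r : ℝ → ℝ be differentiable on a neighborhood of p* with derivatives continuous at p*, let u_l, u_r ∈ ℝ, set f(p) = f_l(p) + f_r(p) + u_r − u_l, and assume f(p*) = 0 and f'(p*) = f_l'(p*) + f_r'(p*) ≠ 0. Fix η ∈ (0,1). Then there exists ε > 0 with the following property: suppose sequences (p_n), (F_{n,l}), (F_{n,r}), (F'_{n,l}), (F'_{n,r}) satisfy |p_0 − p*| ≤ ε, F'_n := F'_{n,l} + F'_{n,r} ≠ 0, p_{n+1} = p_n − F_n/F'_n with F_n := F_{n,l} + F_{n,r} + u_r − u_l, the error bounds |F_{n,k} − f_k(p_n)| ≤ (η/6)|F_n| and |F'_{n,k} − f_k'(p_n)| ≤ (η/6)|F'_n| for k ∈ {l,r} and all n, and the sequence (F'_n) is bounded. Then p_n → p* and the velocity iterates u_n = (u_l + u_r + F_{n,r} − F_{n,l})/2 converge to u* = (u_l + u_r + f_r(p*) − f_l(p*))/2. -/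
open Set Filter

set_option maxHeartbeats 1000000 in
/-- Convergence of the approximate Riemann solver: the inexact Newton
iterates for the interface pressure converge to `p*`, and the velocity
iterates `u_n = (u_l + u_r + F_{n,r} - F_{n,l})/2` converge to
`u* = (u_l + u_r + f_r(p*) - f_l(p*))/2`, provided the evaluation errors of
`f_k(p_n)` and `f_k'(p_n)` are bounded by `η/6·|F_n|` and `η/6·|F'_n|`
and the sequence `(F'_n)` is bounded. -/
theorem approximate_riemann_solver_convergence
    (fl fr fl' fr' : ℝ → ℝ) (pstar ul ur : ℝ)
    (hdl : ∀ᶠ x in nhds pstar, HasDerivAt fl (fl' x) x)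
    (hdr : ∀ᶠ x in nhds pstar, HasDerivAt fr (fr' x) x)
    (hcl : ContinuousAt fl' pstar) (hcr : ContinuousAt fr' pstar)
    (hroot : fl pstar + fr pstar + ur - ul = 0)
    (hne : fl' pstar + fr' pstar ≠ 0)
    (η : ℝ) (hη : η ∈ Ioo (0 : ℝ) 1) :
    ∃ ε > 0, ∀ p Fl Fr Fl' Fr' : ℕ → ℝ,
      |p 0 - pstar| ≤ ε →
      (∀ n, Fl' n + Fr' n ≠ 0) →
      (∀ n, p (n + 1) =
        p n - (Fl n + Fr n + ur - ul) / (Fl' n + Fr' n)) →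
      (∀ n, |Fl n - fl (p n)| ≤ η / 6 * |Fl n + Fr n + ur - ul|) →
      (∀ n, |Fr n - fr (p n)| ≤ η / 6 * |Fl n + Fr n + ur - ul|) →
      (∀ n, |Fl' n - fl' (p n)| ≤ η / 6 * |Fl' n + Fr' n|) →
      (∀ n, |Fr' n - fr' (p n)| ≤ η / 6 * |Fl' n + Fr' n|) →
      (∃ M : ℝ, ∀ n, |Fl' n + Fr' n| ≤ M) →
      Tendsto p atTop (nhds pstar) ∧
        Tendsto (fun n => (ul + ur + Fr n - Fl n) / 2) atTop
          (nhds ((ul + ur + fr pstar - fl pstar) / 2)) := by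
  obtain ⟨hη0, hη1⟩ := hη
  set D : ℝ := fl' pstar + fr' pstar with hDdef
  set A : ℝ := |D| with hAdef
  have hApos : 0 < A := abs_pos.mpr hne
  set a : ℝ := η / 3 with hadef
  have ha0 : 0 < a := by positivity
  have ha3 : 3 * a < 1 := by rw [hadef]; linarith
  have ha1 : a < 1 := by linarith
  set θ : ℝ := (1 - η) * A / 4 with hθdef
  have hθ0 : 0 < θ := by
    rw [hθdef]
    have : 0 < 1 - η := by linarith
    positivity
  have hθA : θ < A := by rw [hθdef]; nlinarith
  -- neighborhood where derivatives exist and f' is close to D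
  have hev : ∀ᶠ x in nhds pstar,
      HasDerivAt fl (fl' x) x ∧ HasDerivAt fr (fr' x) x ∧ |fl' x + fr' x - D| ≤ θ := by
    have hc : ContinuousAt (fun x => fl' x + fr' x) pstar := hcl.add hcr
    have hc' : ∀ᶠ x in nhds pstar, |fl' x + fr' x - D| ≤ θ := by
      have := hc (Metric.closedBall_mem_nhds D hθ0)
      filter_upwards [this] with x hx
      simpa [Real.dist_eq] using Metric.mem_closedBall.mp hx
    filter_upwards [hdl, hdr, hc'] with x h1 h2 h3 using ⟨h1, h2, h3⟩
  rw [Metric.eventually_nhds_iff] at hev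
  obtain ⟨ε₀, hε₀, hball⟩ := hev
  set ε : ℝ := ε₀ / 2 with hεdef
  have hε : 0 < ε := by positivity
  have hE : ∀ x : ℝ, |x - pstar| ≤ ε →
      HasDerivAt fl (fl' x) x ∧ HasDerivAt fr (fr' x) x ∧ |fl' x + fr' x - D| ≤ θ := by
    intro x hx
    exact hball (by rw [Real.dist_eq]; linarith)
  -- mean value estimate on the closed ball
  have hmvt : ∀ x : ℝ, |x - pstar| ≤ ε →
      |fl x + fr x + ur - ul - D * (x - pstar)| ≤ θ * |x - pstar| := by
    intro x hx
    have hconv : Convex ℝ (Metric.closedBall pstar ε) := convex_closedBall _ _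
    have key := hconv.norm_image_sub_le_of_norm_hasDerivWithin_le
      (f := fun y => fl y + fr y - D * y) (f' := fun y => fl' y + fr' y - D)
      (C := θ) (x := pstar) (y := x)
      (fun y hy => by
        have hy' : |y - pstar| ≤ ε := by
          simpa [Real.dist_eq] using Metric.mem_closedBall.mp hy
        obtain ⟨h1, h2, _⟩ := hE y hy'
        exact ((h1.add h2).sub (by simpa using (hasDerivAt_id y).const_mul D)).hasDerivWithinAt)
      (fun y hy => by
        have hy' : |y - pstar| ≤ ε := by
          simpa [Real.dist_eq] using Metric.mem_closedBall.mp hy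
        simpa [Real.norm_eq_abs] using (hE y hy').2.2)
      (Metric.mem_closedBall_self hε.le)
      (by simpa [Metric.mem_closedBall, Real.dist_eq] using hx)
    have : |fl x + fr x - D * x - (fl pstar + fr pstar - D * pstar)| ≤ θ * |x - pstar| := by
      simpa [Real.norm_eq_abs] using key
    have heq : fl x + fr x + ur - ul - D * (x - pstar)
        = fl x + fr x - D * x - (fl pstar + fr pstar - D * pstar) := by
      have : fl pstar + fr pstar = ul - ur := by linarith
      rw [this]; ring
    rw [heq]; exact this
  -- contraction constants
  set B : ℝ := a * (A + θ) / (1 - a) with hBdef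
  have hB0 : 0 ≤ B := by
    rw [hBdef]
    have : (0:ℝ) < 1 - a := by linarith
    positivity
  have h1a : (0:ℝ) < 1 - a := by linarith
  have hB : (1 - a) * B = a * (A + θ) := by
    rw [hBdef]; field_simp
  set K : ℝ := 2 * θ + B with hKdef
  have hK0 : 0 ≤ K := by rw [hKdef]; positivity
  set q : ℝ := a + K * (1 + a) / (A - θ) with hqdef
  have hAθ : 0 < A - θ := by linarith
  have hq0 : 0 ≤ q := by
    rw [hqdef]
    have : 0 ≤ K * (1 + a) / (A - θ) := by positivity
    linarith
  have hθ' : 4 * θ = (1 - 3 * a) * A := by rw [hθdef, hadef]; ring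
  have hq1 : q < 1 := by
    have key : K * (1 + a) < (1 - a) * (A - θ) := by
      nlinarith [hB, hθ', mul_pos h1a hθ0, mul_pos (mul_pos h1a h1a) hAθ]
    have : K * (1 + a) / (A - θ) < 1 - a := (div_lt_iff₀ hAθ).mpr (by linarith)
    rw [hqdef]; linarith
  -- one step of the inexact Newton iteration
  have hfbound : ∀ x : ℝ, |x - pstar| ≤ ε →
      |fl x + fr x + ur - ul| ≤ (A + θ) * |x - pstar| := by
    intro x hx
    have h1 := hmvt x hx
    have h2 : |D * (x - pstar)| = A * |x - pstar| := by
      rw [abs_mul, hAdef]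
    calc |fl x + fr x + ur - ul|
        = |(fl x + fr x + ur - ul - D * (x - pstar)) + D * (x - pstar)| := by ring_nf
      _ ≤ |fl x + fr x + ur - ul - D * (x - pstar)| + |D * (x - pstar)| := abs_add_le _ _
      _ ≤ θ * |x - pstar| + A * |x - pstar| := by rw [h2] at *; linarith
      _ = (A + θ) * |x - pstar| := by ring
  have hstep : ∀ (x Gl Gr Gl' Gr' : ℝ), |x - pstar| ≤ ε →
      Gl' + Gr' ≠ 0 →
      |Gl - fl x| ≤ η / 6 * |Gl + Gr + ur - ul| →
      |Gr - fr x| ≤ η / 6 * |Gl + Gr + ur - ul| →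
      |Gl' - fl' x| ≤ η / 6 * |Gl' + Gr'| →
      |Gr' - fr' x| ≤ η / 6 * |Gl' + Gr'| →
      |x - (Gl + Gr + ur - ul) / (Gl' + Gr') - pstar| ≤ q * |x - pstar| := by
    intro x Gl Gr Gl' Gr' hx hG'ne hel her hel' her'
    set G : ℝ := Gl + Gr + ur - ul with hGdef
    set G' : ℝ := Gl' + Gr' with hG'def
    set fx : ℝ := fl x + fr x + ur - ul with hfxdef
    set gx : ℝ := fl' x + fr' x with hgxdef
    have hG'pos : 0 < |G'| := abs_pos.mpr hG'ne
    have hG : |G - fx| ≤ a * |G| := by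
      have : G - fx = (Gl - fl x) + (Gr - fr x) := by rw [hGdef, hfxdef]; ring
      calc |G - fx| = |(Gl - fl x) + (Gr - fr x)| := by rw [this]
        _ ≤ |Gl - fl x| + |Gr - fr x| := abs_add_le _ _
        _ ≤ a * |G| := by rw [hadef]; linarith
    have hG' : |G' - gx| ≤ a * |G'| := by
      have : G' - gx = (Gl' - fl' x) + (Gr' - fr' x) := by rw [hG'def, hgxdef]; ring
      calc |G' - gx| = |(Gl' - fl' x) + (Gr' - fr' x)| := by rw [this]
        _ ≤ |Gl' - fl' x| + |Gr' - fr' x| := abs_add_le _ _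
        _ ≤ a * |G'| := by rw [hadef]; linarith
    have hgx : |gx - D| ≤ θ := (hE x hx).2.2
    have hfx1 : |fx - D * (x - pstar)| ≤ θ * |x - pstar| := hmvt x hx
    have hfx2 : |fx| ≤ (A + θ) * |x - pstar| := hfbound x hx
    -- lower bound on |G'|
    have hG'low : A - θ ≤ (1 + a) * |G'| := by
      have h1 : A ≤ |gx| + θ := by
        have : |D| ≤ |gx| + |gx - D| := by
          calc |D| = |gx - (gx - D)| := by ring_nf
            _ ≤ |gx| + |gx - D| := abs_sub _ _
        rw [hAdef]; linarith
      have h2 : |gx| ≤ |G'| + a * |G'| := by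
        have : |gx| ≤ |G'| + |G' - gx| := by
          calc |gx| = |G' - (G' - gx)| := by ring_nf
            _ ≤ |G'| + |G' - gx| := abs_sub _ _
        linarith
      linarith
    -- upper bound on |G|
    have hGlow : (1 - a) * |G| ≤ (A + θ) * |x - pstar| := by
      have : |G| ≤ |fx| + a * |G| := by
        have h : |G| ≤ |fx| + |G - fx| := by
          calc |G| = |fx + (G - fx)| := by ring_nf
            _ ≤ |fx| + |G - fx| := abs_add_le _ _
        linarith
      linarith
    -- key identity
    have hid : x - G / G' - pstar =
        ((x - pstar) * (G' - gx) + (x - pstar) * (gx - D) + (D * (x - pstar) - fx) + (fx - G)) / G' := by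
      field_simp
      ring
    have hnum : |(x - pstar) * (G' - gx) + (x - pstar) * (gx - D) + (D * (x - pstar) - fx) + (fx - G)|
        ≤ (a * |G'| + 2 * θ + B) * |x - pstar| := by
      have t1 : |(x - pstar) * (G' - gx)| ≤ |x - pstar| * (a * |G'|) := by
        rw [abs_mul]
        exact mul_le_mul_of_nonneg_left hG' (abs_nonneg _)
      have t2 : |(x - pstar) * (gx - D)| ≤ |x - pstar| * θ := by
        rw [abs_mul]
        exact mul_le_mul_of_nonneg_left hgx (abs_nonneg _)
      have t3 : |D * (x - pstar) - fx| ≤ θ * |x - pstar| := by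
        rw [abs_sub_comm]; exact hfx1
      have t4 : |fx - G| ≤ B * |x - pstar| := by
        have h1 : |fx - G| ≤ a * |G| := by rw [abs_sub_comm]; exact hG
        have h2 : a * ((1 - a) * |G|) ≤ a * ((A + θ) * |x - pstar|) :=
          mul_le_mul_of_nonneg_left hGlow ha0.le
        -- (1-a) * (a * |G|) ≤ (1-a) * B * |x - pstar|
        have h3 : (1 - a) * (a * |G|) ≤ ((1 - a) * B) * |x - pstar| := by
          rw [hB]; linarith
        have h4 : a * |G| ≤ B * |x - pstar| :=
          le_of_mul_le_mul_left (by linarith) h1a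
        linarith
      calc |(x - pstar) * (G' - gx) + (x - pstar) * (gx - D) + (D * (x - pstar) - fx) + (fx - G)|
          ≤ |(x - pstar) * (G' - gx) + (x - pstar) * (gx - D) + (D * (x - pstar) - fx)| + |fx - G| :=
            abs_add_le _ _
        _ ≤ |(x - pstar) * (G' - gx) + (x - pstar) * (gx - D)| + |D * (x - pstar) - fx| + |fx - G| := by
            linarith [abs_add_le ((x - pstar) * (G' - gx) + (x - pstar) * (gx - D)) (D * (x - pstar) - fx)]
        _ ≤ |(x - pstar) * (G' - gx)| + |(x - pstar) * (gx - D)| + |D * (x - pstar) - fx| + |fx - G| := by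
            linarith [abs_add_le ((x - pstar) * (G' - gx)) ((x - pstar) * (gx - D))]
        _ ≤ |x - pstar| * (a * |G'|) + |x - pstar| * θ + θ * |x - pstar| + B * |x - pstar| := by
            linarith
        _ = (a * |G'| + 2 * θ + B) * |x - pstar| := by ring
    rw [hid, abs_div]
    rw [div_le_iff₀ hG'pos]
    -- need |num| ≤ q * |x - pstar| * |G'|
    have hK' : K * |x - pstar| ≤ K * (1 + a) / (A - θ) * |x - pstar| * |G'| := by
      have h1 : K * (A - θ) ≤ K * ((1 + a) * |G'|) := mul_le_mul_of_nonneg_left hG'low hK0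
      have h2 : K ≤ K * (1 + a) / (A - θ) * |G'| := by
        rw [div_mul_eq_mul_div, le_div_iff₀ hAθ]
        linarith
      linarith [mul_le_mul_of_nonneg_left h2 (abs_nonneg (x - pstar))]
    calc |(x - pstar) * (G' - gx) + (x - pstar) * (gx - D) + (D * (x - pstar) - fx) + (fx - G)|
        ≤ (a * |G'| + 2 * θ + B) * |x - pstar| := hnum
      _ = a * |x - pstar| * |G'| + K * |x - pstar| := by rw [hKdef]; ring
      _ ≤ a * |x - pstar| * |G'| + K * (1 + a) / (A - θ) * |x - pstar| * |G'| := by linarith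
      _ = q * |x - pstar| * |G'| := by rw [hqdef]; ring
  -- now the main argument
  refine ⟨ε, hε, fun p Fl Fr Fl' Fr' hp0 hne' hrec hl hr hl' hr' _ => ?_⟩
  have hind : ∀ n, |p n - pstar| ≤ q ^ n * ε := by
    intro n
    induction n with
    | zero => simpa using hp0
    | succ n ih =>
      have hqn : q ^ n ≤ 1 := pow_le_one₀ hq0 hq1.le
      have hin : |p n - pstar| ≤ ε := by
        have := mul_le_mul_of_nonneg_right hqn hε.le
        linarith
      have := hstep (p n) (Fl n) (Fr n) (Fl' n) (Fr' n) hin (hne' n) (hl n) (hr n) (hl' n) (hr' n)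
      rw [← hrec n] at this
      calc |p (n + 1) - pstar| ≤ q * |p n - pstar| := this
        _ ≤ q * (q ^ n * ε) := mul_le_mul_of_nonneg_left ih hq0
        _ = q ^ (n + 1) * ε := by ring
  have hballn : ∀ n, |p n - pstar| ≤ ε := by
    intro n
    have hqn : q ^ n ≤ 1 := pow_le_one₀ hq0 hq1.le
    have := mul_le_mul_of_nonneg_right hqn hε.le
    linarith [hind n]
  have hqlim : Tendsto (fun n : ℕ => q ^ n * ε) atTop (nhds 0) := by
    have := (tendsto_pow_atTop_nhds_zero_of_lt_one hq0 hq1).mul_const ε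
    simpa using this
  have hplim : Tendsto p atTop (nhds pstar) := by
    rw [tendsto_iff_dist_tendsto_zero]
    exact squeeze_zero (fun n => dist_nonneg) (fun n => by
      rw [Real.dist_eq]; exact hind n) hqlim
  refine ⟨hplim, ?_⟩
  -- |G n| → 0
  have hGlim : Tendsto (fun n => |Fl n + Fr n + ur - ul|) atTop (nhds 0) := by
    apply squeeze_zero (fun n => abs_nonneg _)
      (g := fun n => (A + θ) / (1 - a) * (q ^ n * ε))
    · intro n
      have h1 : |Fl n + Fr n + ur - ul| - (η / 6 * |Fl n + Fr n + ur - ul| + η / 6 * |Fl n + Fr n + ur - ul|)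
          ≤ |fl (p n) + fr (p n) + ur - ul| := by
        have := hl n
        have := hr n
        have htr : |Fl n + Fr n + ur - ul| ≤ |fl (p n) + fr (p n) + ur - ul|
            + |Fl n - fl (p n)| + |Fr n - fr (p n)| := by
          have heq : Fl n + Fr n + ur - ul =
              (fl (p n) + fr (p n) + ur - ul) + (Fl n - fl (p n)) + (Fr n - fr (p n)) := by ring
          calc |Fl n + Fr n + ur - ul|
              = |(fl (p n) + fr (p n) + ur - ul) + (Fl n - fl (p n)) + (Fr n - fr (p n))| := by rw [← heq]
            _ ≤ |(fl (p n) + fr (p n) + ur - ul) + (Fl n - fl (p n))| + |Fr n - fr (p n)| := abs_add_le _ _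
            _ ≤ |fl (p n) + fr (p n) + ur - ul| + |Fl n - fl (p n)| + |Fr n - fr (p n)| := by
                linarith [abs_add_le (fl (p n) + fr (p n) + ur - ul) (Fl n - fl (p n))]
        linarith
      have h2 : |fl (p n) + fr (p n) + ur - ul| ≤ (A + θ) * |p n - pstar| :=
        hfbound (p n) (hballn n)
      have h3 : (1 - a) * |Fl n + Fr n + ur - ul| ≤ (A + θ) * |p n - pstar| := by
        have he : η / 6 * |Fl n + Fr n + ur - ul| + η / 6 * |Fl n + Fr n + ur - ul|
            = a * |Fl n + Fr n + ur - ul| := by rw [hadef]; ring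
        linarith
      have h4 : (A + θ) * |p n - pstar| ≤ (A + θ) * (q ^ n * ε) :=
        mul_le_mul_of_nonneg_left (hind n) (by positivity)
      rw [div_mul_eq_mul_div, le_div_iff₀ h1a]
      linarith
    · have := hqlim.const_mul ((A + θ) / (1 - a))
      simpa using this
  have hflim : Tendsto Fl atTop (nhds (fl pstar)) := by
    have hcont : Tendsto (fun n => fl (p n)) atTop (nhds (fl pstar)) :=
      (hdl.self_of_nhds.continuousAt.tendsto).comp hplim
    have hdiff : Tendsto (fun n => Fl n - fl (p n)) atTop (nhds 0) := by
      rw [tendsto_zero_iff_abs_tendsto_zero]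
      apply squeeze_zero (fun n => abs_nonneg _) (g := fun n => η / 6 * |Fl n + Fr n + ur - ul|)
      · intro n; simpa using hl n
      · simpa using hGlim.const_mul (η / 6)
    have := hdiff.add hcont
    simpa using this
  have hfrlim : Tendsto Fr atTop (nhds (fr pstar)) := by
    have hcont : Tendsto (fun n => fr (p n)) atTop (nhds (fr pstar)) :=
      (hdr.self_of_nhds.continuousAt.tendsto).comp hplim
    have hdiff : Tendsto (fun n => Fr n - fr (p n)) atTop (nhds 0) := by
      rw [tendsto_zero_iff_abs_tendsto_zero]
      apply squeeze_zero (fun n => abs_nonneg _) (g := fun n => η / 6 * |Fl n + Fr n + ur - ul|)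
      · intro n; simpa using hr n
      · simpa using hGlim.const_mul (η / 6)
    have := hdiff.add hcont
    simpa using this
  exact (((tendsto_const_nhds.add hfrlim).sub hflim).div_const 2)
end

section
/- Let f : ℝ → ℝ be differentiable, concave, with f'(p) > 0 for every p ∈ ℝ, and suppose f(p*) = 0. Then for any initial point p_0 ∈ ℝ, the Newton–Raphson iterates p_{n+1} = p_n − f(p_n)/f'(p_n) converge to p*. -/
open Set Filter

/-- Global convergence of the Newton–Raphson iteration for a differentiable,
concave function with everywhere positive derivative and a root `p*`:
from any initial point the Newton iterates converge to `p*`. -/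
theorem newton_global_convergence_concave
    (f : ℝ → ℝ) (pstar : ℝ)
    (hdiff : Differentiable ℝ f)
    (hconc : ConcaveOn ℝ univ f)
    (hderiv_pos : ∀ p : ℝ, 0 < deriv f p)
    (hroot : f pstar = 0) :
    ∀ p₀ : ℝ, ∀ p : ℕ → ℝ, p 0 = p₀ →
      (∀ n, p (n + 1) = p n - f (p n) / deriv f (p n)) →
      Tendsto p atTop (nhds pstar) := by
  intro p₀ p hp0 hrec
  have hmonof : StrictMono f := strictMono_of_deriv_pos hderiv_pos
  -- tangent line lies above the graph
  have tangent : ∀ x y : ℝ, f y ≤ f x + deriv f x * (y - x) := by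
    intro x y
    rcases lt_trichotomy x y with h | h | h
    · have hs := hconc.slope_le_deriv (mem_univ x) (mem_univ y) h (hdiff x)
      rw [slope_def_field] at hs
      have hxy : (0:ℝ) < y - x := sub_pos.2 h
      have : (f y - f x) / (y - x) ≤ deriv f x := by
        rw [div_le_iff₀ hxy] at *
        nlinarith [hs]
      rw [div_le_iff₀ hxy] at this
      linarith
    · simp [h]
    · have hs := hconc.deriv_le_slope (mem_univ y) (mem_univ x) h (hdiff x)
      rw [slope_def_field] at hs
      have hxy : (0:ℝ) < x - y := sub_pos.2 h
      rw [le_div_iff₀ hxy] at hs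
      nlinarith
  set q : ℕ → ℝ := fun n => p (n + 1) with hq
  have hqrec : ∀ n, q (n + 1) = q n - f (q n) / deriv f (q n) := fun n => hrec (n + 1)
  -- after one step, f is nonpositive
  have key1 : ∀ n, f (q n) ≤ 0 := by
    intro n
    have hd : deriv f (p n) ≠ 0 := (hderiv_pos (p n)).ne'
    calc f (q n) = f (p (n + 1)) := rfl
      _ ≤ f (p n) + deriv f (p n) * (p (n + 1) - p n) := tangent _ _
      _ = 0 := by rw [hrec n]; field_simp; ring
  have hle : ∀ n, q n ≤ pstar := by
    intro n
    have : f (q n) ≤ f pstar := by rw [hroot]; exact key1 n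
    exact hmonof.le_iff_le.mp this
  have hmonoq : Monotone q := by
    apply monotone_nat_of_le_succ
    intro n
    have hd : 0 < deriv f (q n) := hderiv_pos (q n)
    have : f (q n) / deriv f (q n) ≤ 0 :=
      div_nonpos_of_nonpos_of_nonneg (key1 n) hd.le
    rw [hqrec n]; linarith
  have hbdd : BddAbove (range q) := ⟨pstar, by rintro x ⟨n, rfl⟩; exact hle n⟩
  set L : ℝ := ⨆ n, q n with hL
  have hqL : Tendsto q atTop (nhds L) := tendsto_atTop_ciSup hmonoq hbdd
  -- f (q n) in terms of differences
  have step : ∀ n, -f (q n) = deriv f (q n) * (q (n + 1) - q n) := by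
    intro n
    have hd : deriv f (q n) ≠ 0 := (hderiv_pos (q n)).ne'
    rw [hqrec n]; field_simp; ring
  have hanti : AntitoneOn (deriv f) univ :=
    hconc.antitoneOn_deriv (fun x _ => hdiff x)
  have hbound : ∀ n, -f (q n) ≤ deriv f (q 0) * (q (n + 1) - q n) := by
    intro n
    rw [step n]
    have hdle : deriv f (q n) ≤ deriv f (q 0) :=
      hanti (mem_univ _) (mem_univ _) (hmonoq (Nat.zero_le n))
    have hnn : 0 ≤ q (n + 1) - q n := sub_nonneg.2 (hmonoq (Nat.le_succ n))
    exact mul_le_mul_of_nonneg_right hdle hnn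
  -- the difference sequence tends to 0
  have hq1L : Tendsto (fun n => q (n + 1)) atTop (nhds L) :=
    hqL.comp (tendsto_add_atTop_nat 1)
  have hg0 : Tendsto (fun n => deriv f (q 0) * (q (n + 1) - q n)) atTop (nhds 0) := by
    have := (hq1L.sub hqL).const_mul (deriv f (q 0))
    simpa using this
  have hfq0 : Tendsto (fun n => f (q n)) atTop (nhds 0) := by
    have hneg : Tendsto (fun n => -(deriv f (q 0) * (q (n + 1) - q n))) atTop (nhds 0) := by
      simpa using hg0.neg
    refine tendsto_of_tendsto_of_tendsto_of_le_of_le hneg tendsto_const_nhds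
      (fun n => ?_) (fun n => key1 n)
    have := hbound n; linarith
  have hfqL : Tendsto (fun n => f (q n)) atTop (nhds (f L)) :=
    (hdiff.continuous.tendsto L).comp hqL
  have hfL : f L = 0 := tendsto_nhds_unique hfqL hfq0
  have hLeq : L = pstar := hmonof.injective (by rw [hfL, hroot])
  rw [hLeq] at hqL
  exact (tendsto_add_atTop_iff_nat 1).mp hqL
end

section
/- Assume conditions (C1) and (C2) hold for Γ, and let ρ_k > 0. Then the function W(ρ) = (ρ/ρ_k − 1)Γ(ρ) − 2 is strictly increasing on (ρ_k, ∞), W(ρ_k) = −2, and W(ρ) → +∞ as ρ → +∞; consequently there exists a unique ρ_max > ρ_k such that (ρ_max − ρ_k)·Γ(ρ_max) = 2ρ_k. -/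
/-!
Write `W(ρ) + 2 = (ρ - ρ_k) Γ(ρ) / ρ_k`. Since `ρ Γ(ρ)` is nondecreasing and `Γ` is nonincreasing
and positive, `(ρ - ρ_k) Γ(ρ) = ρ Γ(ρ) - ρ_k Γ(ρ)` is strictly increasing on `(ρ_k, ∞)`, and
`Γ ≥ Γ∞ > 0` makes it grow at least linearly. It vanishes at `ρ_k`, so the intermediate value
theorem and strict monotonicity give exactly one root of `(ρ - ρ_k) Γ(ρ) = 2 ρ_k` beyond `ρ_k`.
-/

open Set Filter

lemma monotoneOn_Ioi_of_deriv_nonneg {f : ℝ → ℝ} {a : ℝ}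
    (hf : ∀ x > a, DifferentiableAt ℝ f x) (hf' : ∀ x > a, 0 ≤ deriv f x) :
    MonotoneOn f (Ioi a) := by
  have hdiff : DifferentiableOn ℝ f (Ioi a) := fun x hx => (hf x hx).differentiableWithinAt
  refine monotoneOn_of_deriv_nonneg (convex_Ioi a) hdiff.continuousOn ?_ ?_ <;>
    rw [interior_Ioi]
  exacts [hdiff, hf']

lemma antitoneOn_Ioi_of_deriv_nonpos {f : ℝ → ℝ} {a : ℝ}
    (hf : ∀ x > a, DifferentiableAt ℝ f x) (hf' : ∀ x > a, deriv f x ≤ 0) :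
    AntitoneOn f (Ioi a) := by
  have hdiff : DifferentiableOn ℝ f (Ioi a) := fun x hx => (hf x hx).differentiableWithinAt
  refine antitoneOn_of_deriv_nonpos (convex_Ioi a) hdiff.continuousOn ?_ ?_ <;>
    rw [interior_Ioi]
  exacts [hdiff, hf']

lemma strictMonoOn_sub_mul {g : ℝ → ℝ} {c : ℝ} (hc : 0 < c)
    (hmul : MonotoneOn (fun x => x * g x) (Ioi c)) (hanti : AntitoneOn g (Ioi c))
    (hpos : ∀ x ∈ Ioi c, 0 < g x) :
    StrictMonoOn (fun x => (x - c) * g x) (Ioi c) := by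
  intro a ha b hb hab
  have hmul_ab : a * g a ≤ b * g b := hmul ha hb hab.le
  have hg_ab : g b ≤ g a := hanti ha hb hab.le
  have hgb : 0 < g b := hpos b hb
  have ha' : c < a := ha
  -- `a * ((b - c) * g b - (a - c) * g a) ≥ c * (b - a) * g b > 0`, using `c < a`
  nlinarith [mul_nonneg (sub_nonneg.2 ha'.le) (sub_nonneg.2 hmul_ab),
    mul_nonneg hc.le (sub_nonneg.2 hg_ab), mul_pos (mul_pos hc (sub_pos.2 hab)) hgb]

lemma tendsto_sub_mul_atTop {g : ℝ → ℝ} {c m : ℝ} (hm : 0 < m)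
    (hg : ∀ᶠ x in atTop, m ≤ g x) :
    Tendsto (fun x => (x - c) * g x) atTop atTop := by
  refine tendsto_atTop_mono' _ ?_ ((tendsto_atTop_add_const_right _ (-c) tendsto_id).atTop_mul_const hm)
  filter_upwards [hg, eventually_ge_atTop c] with x hgx hx
  simpa [sub_eq_add_neg] using mul_le_mul_of_nonneg_left hgx (sub_nonneg.2 hx)

lemma existsUnique_gt_eq_of_strictMonoOn {f : ℝ → ℝ} {a y : ℝ}
    (hmono : StrictMonoOn f (Ioi a)) (hcont : ContinuousOn f (Ici a)) (ha : f a < y)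
    (htop : Tendsto f atTop atTop) :
    ∃! x, a < x ∧ f x = y := by
  obtain ⟨b, hby, hab⟩ := ((htop.eventually (eventually_gt_atTop y)).and
    (eventually_gt_atTop a)).exists
  obtain ⟨x, hx, hfx⟩ := intermediate_value_Ioo hab.le (hcont.mono Icc_subset_Ici_self) ⟨ha, hby⟩
  exact ⟨x, ⟨hx.1, hfx⟩, fun z hz => hmono.injOn hz.1 hx.1 (hz.2.trans hfx.symm)⟩

theorem compressive_density_limit_general
    (Γ : ℝ → ℝ) (Γinf ρk : ℝ)
    (hΓd : ∀ ρ > (0 : ℝ), DifferentiableAt ℝ Γ ρ)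
    -- condition (C1)
    (hC1a : ∀ ρ > (0 : ℝ), deriv Γ ρ ≤ 0)
    (hC1b : ∀ ρ > (0 : ℝ), 0 ≤ deriv (fun x => x * Γ x) ρ)
    -- condition (C2)
    (hΓinf : 0 < Γinf)
    (hC2a : ∀ ρ > (0 : ℝ), Γinf ≤ Γ ρ)
    (hρk : 0 < ρk) :
    StrictMonoOn (fun ρ => (ρ / ρk - 1) * Γ ρ - 2) (Ioi ρk) ∧
    (ρk / ρk - 1) * Γ ρk - 2 = -2 ∧
    Tendsto (fun ρ => (ρ / ρk - 1) * Γ ρ - 2) atTop atTop ∧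
    (∃! ρmax : ℝ, ρk < ρmax ∧ (ρmax - ρk) * Γ ρmax = 2 * ρk) := by
  have hsub : Ioi ρk ⊆ Ioi 0 := Ioi_subset_Ioi hρk.le
  have hφ_mono : StrictMonoOn (fun x => (x - ρk) * Γ x) (Ioi ρk) :=
    strictMonoOn_sub_mul hρk
      ((monotoneOn_Ioi_of_deriv_nonneg
        (fun x hx => differentiableAt_id.mul (hΓd x hx)) hC1b).mono hsub)
      ((antitoneOn_Ioi_of_deriv_nonpos hΓd hC1a).mono hsub)
      (fun x hx => hΓinf.trans_le (hC2a x (hsub hx)))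
  have hφ_top : Tendsto (fun x => (x - ρk) * Γ x) atTop atTop :=
    tendsto_sub_mul_atTop hΓinf ((eventually_gt_atTop 0).mono hC2a)
  have hφ_cont : ContinuousOn (fun x => (x - ρk) * Γ x) (Ici ρk) := fun x hx =>
    ((continuousAt_id.sub continuousAt_const).mul
      (hΓd x (hρk.trans_le hx)).continuousAt).continuousWithinAt
  have hW : (fun ρ => (ρ / ρk - 1) * Γ ρ - 2) = fun ρ => (ρ - ρk) * Γ ρ / ρk + -2 := by
    ext ρ
    rw [div_sub_one hρk.ne', div_mul_eq_mul_div, sub_eq_add_neg]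
  refine ⟨?_, by simp [div_self hρk.ne'], ?_, ?_⟩
  · rw [hW]
    refine StrictMonoOn.add_const (fun a ha b hb hab => ?_) _
    exact div_lt_div_of_pos_right (hφ_mono ha hb hab) hρk
  · rw [hW]
    exact tendsto_atTop_add_const_right _ _ (hφ_top.atTop_div_const hρk)
  · exact existsUnique_gt_eq_of_strictMonoOn hφ_mono hφ_cont (by simpa using hρk) hφ_top

/-- Under conditions (C1) and (C2), the function
`W(ρ) = (ρ/ρ_k - 1)Γ(ρ) - 2` is strictly increasing on `(ρ_k, ∞)`,
`W(ρ_k) = -2`, `W(ρ) → +∞` as `ρ → +∞`; consequently there exists a unique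
compressive density limit `ρ_max > ρ_k` with
`(ρ_max - ρ_k)·Γ(ρ_max) = 2ρ_k`. -/
theorem compressive_density_limit
    (Γ : ℝ → ℝ) (Γinf ρk : ℝ)
    (hΓd : ∀ ρ > (0 : ℝ), DifferentiableAt ℝ Γ ρ)
    (hΓd2 : ∀ ρ > (0 : ℝ), DifferentiableAt ℝ (deriv Γ) ρ)
    -- condition (C1)
    (hC1a : ∀ ρ > (0 : ℝ), deriv Γ ρ ≤ 0)
    (hC1b : ∀ ρ > (0 : ℝ), 0 ≤ deriv (fun x => x * Γ x) ρ)
    (hC1c : ∀ ρ > (0 : ℝ), 0 ≤ deriv (deriv (fun x => x * Γ x)) ρ)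
    -- condition (C2)
    (hΓinf : 0 < Γinf)
    (hC2a : ∀ ρ > (0 : ℝ), Γinf ≤ Γ ρ)
    (hC2b : ∀ ρ > (0 : ℝ), Γ ρ ≤ Γinf + 2)
    (hρk : 0 < ρk) :
    StrictMonoOn (fun ρ => (ρ / ρk - 1) * Γ ρ - 2) (Ioi ρk) ∧
    (ρk / ρk - 1) * Γ ρk - 2 = -2 ∧
    Tendsto (fun ρ => (ρ / ρk - 1) * Γ ρ - 2) atTop atTop ∧
    (∃! ρmax : ℝ, ρk < ρmax ∧ (ρmax - ρk) * Γ ρmax = 2 * ρk) :=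
  compressive_density_limit_general Γ Γinf ρk hΓd hC1a hC1b hΓinf hC2a hρk
end

section
/- Assume conditions (C1), (C2) and (C3) hold for Γ and h, let ρ_k > 0, p_k > 0 with h(ρ_k) ≤ p_k, and let ρ_max > ρ_k be the unique density with (ρ_max − ρ_k)Γ(ρ_max) = 2ρ_k. Then for every p ∈ ℝ, Φ(p, ρ_max) = −Γ(ρ_k)ρ_k(p_k + h(ρ_max)) − (Γ(ρ_max) + 2)ρ_k(p_k − h(ρ_k)) < 0. -/
open Set Filter

/-- The Hugoniot function `Φ(p,ρ)` associated with the Mie-Grüneisen EOS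
`p(ρ,e) = Γ(ρ)ρe + h(ρ)` and the fixed state `(ρ_k, p_k)`. -/
noncomputable def hugoniot (Γ h : ℝ → ℝ) (ρk pk p ρ : ℝ) : ℝ :=
  Γ ρk * ρk * (p - h ρ) - Γ ρ * ρ * (pk - h ρk)
    - 1 / 2 * Γ ρk * Γ ρ * (p + pk) * (ρ - ρk)

/-- Under conditions (C1), (C2) and (C3), at the compressive density limit
`ρ_max` (where `(ρ_max - ρ_k)Γ(ρ_max) = 2ρ_k`) the Hugoniot function equals
`-Γ(ρ_k)ρ_k(p_k + h(ρ_max)) - (Γ(ρ_max) + 2)ρ_k(p_k - h(ρ_k))` and is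
strictly negative, for every pressure `p`. -/
theorem hugoniot_neg_at_rhomax
    (Γ h : ℝ → ℝ) (Γinf ρk pk ρmax : ℝ)
    (hΓd : ∀ ρ > (0 : ℝ), DifferentiableAt ℝ Γ ρ)
    (hΓd2 : ∀ ρ > (0 : ℝ), DifferentiableAt ℝ (deriv Γ) ρ)
    (hhd : ∀ ρ > (0 : ℝ), DifferentiableAt ℝ h ρ)
    (hhd2 : ∀ ρ > (0 : ℝ), DifferentiableAt ℝ (deriv h) ρ)
    -- condition (C1)
    (hC1a : ∀ ρ > (0 : ℝ), deriv Γ ρ ≤ 0)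
    (hC1b : ∀ ρ > (0 : ℝ), 0 ≤ deriv (fun x => x * Γ x) ρ)
    (hC1c : ∀ ρ > (0 : ℝ), 0 ≤ deriv (deriv (fun x => x * Γ x)) ρ)
    -- condition (C2)
    (hΓinf : 0 < Γinf)
    (hC2a : ∀ ρ > (0 : ℝ), Γinf ≤ Γ ρ)
    (hC2b : ∀ ρ > (0 : ℝ), Γ ρ ≤ Γinf + 2)
    -- condition (C3)
    (hC3a : ∀ ρ > (0 : ℝ), 0 ≤ deriv h ρ)
    (hC3b : ∀ ρ > (0 : ℝ), 0 ≤ deriv (deriv h) ρ)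
    (hρk : 0 < ρk) (hpk : 0 < pk) (hhk : h ρk ≤ pk)
    (hρmax : ρk < ρmax) (hmax : (ρmax - ρk) * Γ ρmax = 2 * ρk) :
    ∀ p : ℝ,
      hugoniot Γ h ρk pk p ρmax =
        -(Γ ρk * ρk * (pk + h ρmax)) - (Γ ρmax + 2) * ρk * (pk - h ρk) ∧
      hugoniot Γ h ρk pk p ρmax < 0 := by
  intro p
  have hΓk : 0 < Γ ρk := lt_of_lt_of_le hΓinf (hC2a ρk hρk)
  have hρm : (0:ℝ) < ρmax := hρk.trans hρmax
  have hΓm : 0 < Γ ρmax := lt_of_lt_of_le hΓinf (hC2a ρmax hρm)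
  -- h is monotone on [ρk, ρmax]
  have hmono : h ρk ≤ h ρmax := by
    have hsub : Icc ρk ρmax ⊆ Ioi (0:ℝ) := fun x hx => lt_of_lt_of_le hρk hx.1
    have : MonotoneOn h (Icc ρk ρmax) := by
      apply monotoneOn_of_deriv_nonneg (convex_Icc ρk ρmax)
      · exact ContinuousOn.mono (fun x hx => (hhd x hx).continuousAt.continuousWithinAt) hsub
      · intro x hx
        have hx' : x ∈ Icc ρk ρmax := interior_subset hx
        exact (hhd x (hsub hx')).differentiableWithinAt
      · intro x hx
        have hx' : x ∈ Icc ρk ρmax := interior_subset hx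
        exact hC3a x (hsub hx')
    exact this (left_mem_Icc.2 hρmax.le) (right_mem_Icc.2 hρmax.le) hρmax.le
  have heq : hugoniot Γ h ρk pk p ρmax =
      -(Γ ρk * ρk * (pk + h ρmax)) - (Γ ρmax + 2) * ρk * (pk - h ρk) := by
    unfold hugoniot
    linear_combination (-(1/2) * Γ ρk * (p + pk) - (pk - h ρk)) * hmax
  refine ⟨heq, heq ▸ ?_⟩
  have hAB : Γ ρk ≤ Γ ρmax + 2 := (hC2b ρk hρk).trans (by linarith [hC2a ρmax hρm])
  nlinarith [mul_pos hΓk hρk, mul_nonneg (mul_nonneg (sub_nonneg.2 hAB) hρk.le) (sub_nonneg.2 hhk), mul_nonneg (mul_nonneg hΓk.le hρk.le) (sub_nonneg.2 hmono)]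
end

section
/- Assume conditions (C1), (C2) and (C3) hold for Γ and h, let ρ_k > 0, p_k ≥ h(ρ_k), and let p ∈ ℝ with p + p_k > 0. Then for every ρ > 0 the partial derivative of the Hugoniot function with respect to the density, ∂Φ/∂ρ(p,ρ) = −Γ(ρ_k)ρ_k(h'(ρ) − ((p+p_k)/2)Γ'(ρ)) − Γ(ρ_k)(Γ(ρ) + ρΓ'(ρ))·((p_k − h(ρ_k))/Γ(ρ_k) + (p+p_k)/2), is strictly negative; in particular, ρ ↦ Φ(p,ρ) is strictly decreasing on (0,∞). -/
open Set Filter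

lemma hasDerivAt_hugoniot {Γ h : ℝ → ℝ} {Γ' h' ρk pk p ρ : ℝ}
    (hΓ : HasDerivAt Γ Γ' ρ) (hh : HasDerivAt h h' ρ) (hΓk : Γ ρk ≠ 0) :
    HasDerivAt (hugoniot Γ h ρk pk p)
      (-(Γ ρk * ρk * (h' - (p + pk) / 2 * Γ'))
        - Γ ρk * (Γ ρ + ρ * Γ') * ((pk - h ρk) / Γ ρk + (p + pk) / 2)) ρ := by
  refine HasDerivAt.congr_deriv (f := hugoniot Γ h ρk pk p)
    (((((hasDerivAt_const ρ p).sub hh).const_mul (Γ ρk * ρk)).sub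
      ((hΓ.mul (hasDerivAt_id' ρ)).mul_const (pk - h ρk))).sub
      (((hΓ.const_mul (1 / 2 * Γ ρk)).mul_const (p + pk)).mul
        ((hasDerivAt_id' ρ).sub_const ρk))) ?_
  field_simp
  ring

lemma hugoniot_slope_neg {Γk ρk Γρ Γ' h' ρ c s : ℝ} (hΓk : 0 < Γk) (hρk : 0 < ρk)
    (hΓρ : 0 < Γρ) (hc : 0 ≤ c) (hs : 0 < s) (hΓ' : Γ' ≤ 0) (hh' : 0 ≤ h')
    (hmono : 0 ≤ Γρ + ρ * Γ') :
    -(Γk * ρk * (h' - s * Γ')) - Γk * (Γρ + ρ * Γ') * (c / Γk + s) < 0 := by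
  have hcs : 0 < c / Γk + s := by positivity
  suffices 0 < Γk * ρk * (h' - s * Γ') + Γk * (Γρ + ρ * Γ') * (c / Γk + s) by linarith
  rcases hΓ'.lt_or_eq with hΓ'_neg | rfl
  · have : 0 < h' - s * Γ' := by nlinarith
    exact add_pos_of_pos_of_nonneg (by positivity) (by positivity)
  · simp only [mul_zero, sub_zero, add_zero]
    positivity

theorem hugoniot_strictAnti_general
    (Γ h : ℝ → ℝ) (Γinf ρk pk p : ℝ)
    (hΓd : ∀ ρ > (0 : ℝ), DifferentiableAt ℝ Γ ρ)
    (hhd : ∀ ρ > (0 : ℝ), DifferentiableAt ℝ h ρ)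
    -- condition (C1)
    (hC1a : ∀ ρ > (0 : ℝ), deriv Γ ρ ≤ 0)
    (hC1b : ∀ ρ > (0 : ℝ), 0 ≤ deriv (fun x => x * Γ x) ρ)
    -- condition (C2)
    (hΓinf : 0 < Γinf)
    (hC2a : ∀ ρ > (0 : ℝ), Γinf ≤ Γ ρ)
    -- condition (C3)
    (hC3a : ∀ ρ > (0 : ℝ), 0 ≤ deriv h ρ)
    (hρk : 0 < ρk) (hpk : h ρk ≤ pk) (hppk : 0 < p + pk) :
    (∀ ρ > (0 : ℝ),
      deriv (fun x => hugoniot Γ h ρk pk p x) ρ =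
        -(Γ ρk * ρk * (deriv h ρ - (p + pk) / 2 * deriv Γ ρ))
          - Γ ρk * (Γ ρ + ρ * deriv Γ ρ)
            * ((pk - h ρk) / Γ ρk + (p + pk) / 2) ∧
      deriv (fun x => hugoniot Γ h ρk pk p x) ρ < 0) ∧
    StrictAntiOn (fun ρ => hugoniot Γ h ρk pk p ρ) (Ioi 0) := by
  have hΓpos : ∀ ρ > (0 : ℝ), 0 < Γ ρ := fun ρ hρ => hΓinf.trans_le (hC2a ρ hρ)
  have hΦ' := fun ρ (hρ : 0 < ρ) => hasDerivAt_hugoniot (pk := pk) (p := p)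
    (hΓd ρ hρ).hasDerivAt (hhd ρ hρ).hasDerivAt (hΓpos ρk hρk).ne'
  have hslope : ∀ ρ > (0 : ℝ), deriv (hugoniot Γ h ρk pk p) ρ < 0 := by
    intro ρ hρ
    have hmono : 0 ≤ Γ ρ + ρ * deriv Γ ρ := by
      have hρΓ := hC1b ρ hρ
      rw [deriv_fun_mul differentiableAt_fun_id (hΓd ρ hρ), deriv_id''] at hρΓ
      linarith
    rw [(hΦ' ρ hρ).deriv]
    exact hugoniot_slope_neg (hΓpos ρk hρk) hρk (hΓpos ρ hρ) (sub_nonneg.2 hpk)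
      (half_pos hppk) (hC1a ρ hρ) (hC3a ρ hρ) hmono
  refine ⟨fun ρ hρ => ⟨(hΦ' ρ hρ).deriv, hslope ρ hρ⟩, ?_⟩
  refine strictAntiOn_of_deriv_neg (convex_Ioi 0)
    (fun ρ hρ => (hΦ' ρ hρ).continuousAt.continuousWithinAt) ?_
  rw [interior_Ioi]
  exact hslope

/-- Under conditions (C1), (C2) and (C3), with `p_k ≥ h(ρ_k)` and
`p + p_k > 0`, the partial derivative of the Hugoniot function with respect
to the density equals
`-Γ(ρ_k)ρ_k(h'(ρ) - ((p+p_k)/2)Γ'(ρ))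
  - Γ(ρ_k)(Γ(ρ) + ρΓ'(ρ))((p_k - h(ρ_k))/Γ(ρ_k) + (p+p_k)/2)`
and is strictly negative; in particular `ρ ↦ Φ(p,ρ)` is strictly
decreasing on `(0,∞)`. -/
theorem hugoniot_strictAnti
    (Γ h : ℝ → ℝ) (Γinf ρk pk p : ℝ)
    (hΓd : ∀ ρ > (0 : ℝ), DifferentiableAt ℝ Γ ρ)
    (hΓd2 : ∀ ρ > (0 : ℝ), DifferentiableAt ℝ (deriv Γ) ρ)
    (hhd : ∀ ρ > (0 : ℝ), DifferentiableAt ℝ h ρ)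
    (hhd2 : ∀ ρ > (0 : ℝ), DifferentiableAt ℝ (deriv h) ρ)
    -- condition (C1)
    (hC1a : ∀ ρ > (0 : ℝ), deriv Γ ρ ≤ 0)
    (hC1b : ∀ ρ > (0 : ℝ), 0 ≤ deriv (fun x => x * Γ x) ρ)
    (hC1c : ∀ ρ > (0 : ℝ), 0 ≤ deriv (deriv (fun x => x * Γ x)) ρ)
    -- condition (C2)
    (hΓinf : 0 < Γinf)
    (hC2a : ∀ ρ > (0 : ℝ), Γinf ≤ Γ ρ)
    (hC2b : ∀ ρ > (0 : ℝ), Γ ρ ≤ Γinf + 2)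
    -- condition (C3)
    (hC3a : ∀ ρ > (0 : ℝ), 0 ≤ deriv h ρ)
    (hC3b : ∀ ρ > (0 : ℝ), 0 ≤ deriv (deriv h) ρ)
    (hρk : 0 < ρk) (hpk : h ρk ≤ pk) (hppk : 0 < p + pk) :
    (∀ ρ > (0 : ℝ),
      deriv (fun x => hugoniot Γ h ρk pk p x) ρ =
        -(Γ ρk * ρk * (deriv h ρ - (p + pk) / 2 * deriv Γ ρ))
          - Γ ρk * (Γ ρ + ρ * deriv Γ ρ)
            * ((pk - h ρk) / Γ ρk + (p + pk) / 2) ∧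
      deriv (fun x => hugoniot Γ h ρk pk p x) ρ < 0) ∧
    StrictAntiOn (fun ρ => hugoniot Γ h ρk pk p ρ) (Ioi 0) :=
  hugoniot_strictAnti_general Γ h Γinf ρk pk p hΓd hhd hC1a hC1b hΓinf hC2a hC3a hρk hpk hppk
end

section
/- Assume conditions (C1), (C2) and (C3) hold for Γ and h. Then for every ρ > 0, every e ≥ 0 and every p > 0, the quantity (1/2)·(ρ·(ρΓ(ρ))'' + (ρΓ(ρ))'·(2 + Γ(ρ)))·e + (1/2)·ρ·h''(ρ) + (p/(2ρ))·(Γ(ρ)² + 2(ρΓ(ρ))') + (1/2)·(2 + Γ(ρ))·h'(ρ) is strictly positive. -/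
open Set Filter

/-- Under conditions (C1), (C2) and (C3), the quantity `c²·𝒢` (where `𝒢`
is the fundamental derivative of the Mie-Grüneisen EOS
`p(ρ,e) = Γ(ρ)ρe + h(ρ)`) is strictly positive for every `ρ > 0`, `e ≥ 0`
and `p > 0`. -/
theorem fundamental_derivative_pos
    (Γ h : ℝ → ℝ) (Γinf : ℝ)
    (hΓd : ∀ ρ > (0 : ℝ), DifferentiableAt ℝ Γ ρ)
    (hΓd2 : ∀ ρ > (0 : ℝ), DifferentiableAt ℝ (deriv Γ) ρ)
    (hhd : ∀ ρ > (0 : ℝ), DifferentiableAt ℝ h ρ)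
    (hhd2 : ∀ ρ > (0 : ℝ), DifferentiableAt ℝ (deriv h) ρ)
    -- condition (C1)
    (hC1a : ∀ ρ > (0 : ℝ), deriv Γ ρ ≤ 0)
    (hC1b : ∀ ρ > (0 : ℝ), 0 ≤ deriv (fun x => x * Γ x) ρ)
    (hC1c : ∀ ρ > (0 : ℝ), 0 ≤ deriv (deriv (fun x => x * Γ x)) ρ)
    -- condition (C2)
    (hΓinf : 0 < Γinf)
    (hC2a : ∀ ρ > (0 : ℝ), Γinf ≤ Γ ρ)
    (hC2b : ∀ ρ > (0 : ℝ), Γ ρ ≤ Γinf + 2)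
    -- condition (C3)
    (hC3a : ∀ ρ > (0 : ℝ), 0 ≤ deriv h ρ)
    (hC3b : ∀ ρ > (0 : ℝ), 0 ≤ deriv (deriv h) ρ) :
    ∀ ρ > (0 : ℝ), ∀ e ≥ (0 : ℝ), ∀ p > (0 : ℝ),
      0 < 1 / 2 * (ρ * deriv (deriv (fun x => x * Γ x)) ρ
            + deriv (fun x => x * Γ x) ρ * (2 + Γ ρ)) * e
        + 1 / 2 * ρ * deriv (deriv h) ρ
        + p / (2 * ρ) * ((Γ ρ) ^ 2 + 2 * deriv (fun x => x * Γ x) ρ)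
        + 1 / 2 * (2 + Γ ρ) * deriv h ρ := by
  intro ρ hρ e he p hp
  have hΓpos : 0 < Γ ρ := lt_of_lt_of_le hΓinf (hC2a ρ hρ)
  have h1 : 0 ≤ 1 / 2 * (ρ * deriv (deriv (fun x => x * Γ x)) ρ
      + deriv (fun x => x * Γ x) ρ * (2 + Γ ρ)) * e := by
    apply mul_nonneg (mul_nonneg (by norm_num) _) he
    have := hC1c ρ hρ
    have := hC1b ρ hρ
    positivity
  have h2 : 0 ≤ 1 / 2 * ρ * deriv (deriv h) ρ := by
    have := hC3b ρ hρ; positivity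
  have h3 : 0 < p / (2 * ρ) * ((Γ ρ) ^ 2 + 2 * deriv (fun x => x * Γ x) ρ) := by
    have := hC1b ρ hρ; positivity
  have h4 : 0 ≤ 1 / 2 * (2 + Γ ρ) * deriv h ρ := by
    have := hC3a ρ hρ; positivity
  linarith
end

section
/- Let Γ, h : (0,∞) → ℝ be differentiable with Γ(ρ) > 0 and h'(ρ) ≥ 0 for all ρ > 0. Fix ρ > 0 and p ∈ ℝ with p > h(ρ) and (ρΓ(ρ))'(ρ) > 0. Then the derivative of the specific internal energy function ρ ↦ e(p,ρ) = (p − h(ρ))/(Γ(ρ)·ρ) at ρ is strictly negative. -/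
/-! A quotient of a positive non-increasing numerator by a positive increasing denominator
decreases: by the quotient rule, `(f / g)' = (f' g - f g') / g²` and both terms of the numerator
have a sign. With `f = p - h` and `g = Γ ρ · ρ`, the conditions `h' ≥ 0`, `p > h`, `Γ > 0` and
`(ρ Γ)' > 0` supply exactly these signs. -/

theorem deriv_div_neg_of_hasDerivAt {f g : ℝ → ℝ} {f' g' x : ℝ} (hf : HasDerivAt f f' x)
    (hg : HasDerivAt g g' x) (hf' : f' ≤ 0) (hg' : 0 < g') (hfx : 0 < f x) (hgx : 0 < g x) :
    deriv (f / g) x < 0 := by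
  rw [(hf.div hg hgx.ne').deriv]
  have hf'g : f' * g x ≤ 0 := mul_nonpos_of_nonpos_of_nonneg hf' hgx.le
  have hfg' : 0 < f x * g' := mul_pos hfx hg'
  exact div_neg_of_neg_of_pos (by linarith) (by positivity)

/-- Smith's "strong" condition for the Mie-Grüneisen EOS: at fixed pressure
`p > h(ρ)`, the specific internal energy `e(p,ρ) = (p - h(ρ))/(Γ(ρ)ρ)`
is strictly decreasing in the density, i.e. its derivative is strictly
negative, provided `Γ > 0`, `h' ≥ 0` and `(ρΓ(ρ))'(ρ) > 0`. -/
theorem internal_energy_deriv_neg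
    (Γ h : ℝ → ℝ)
    (hΓd : ∀ x > (0 : ℝ), DifferentiableAt ℝ Γ x)
    (hhd : ∀ x > (0 : ℝ), DifferentiableAt ℝ h x)
    (hΓpos : ∀ x > (0 : ℝ), 0 < Γ x)
    (hh' : ∀ x > (0 : ℝ), 0 ≤ deriv h x)
    (ρ p : ℝ) (hρ : 0 < ρ) (hp : h ρ < p)
    (hρΓ' : 0 < deriv (fun x => x * Γ x) ρ) :
    deriv (fun x => (p - h x) / (Γ x * x)) ρ < 0 := by
  have hnum : HasDerivAt (fun x => p - h x) (-deriv h ρ) ρ :=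
    (hhd ρ hρ).hasDerivAt.const_sub p
  have hden : HasDerivAt (fun x => Γ x * x) (deriv (fun x => x * Γ x) ρ) ρ := by
    simp_rw [mul_comm _ (Γ _)]
    exact ((hΓd ρ hρ).mul differentiableAt_id).hasDerivAt
  exact deriv_div_neg_of_hasDerivAt hnum hden (neg_nonpos.mpr (hh' ρ hρ)) hρΓ' (sub_pos.mpr hp)
    (mul_pos (hΓpos ρ hρ) hρ)
end

section
/- Let A_1, A_2, ω, R_1, R_2, ρ_0 > 0 with R_1 > R_2, and set α = (A_2R_2²/(A_1R_1(R_1 − R_2)))·exp(((2 + ω)(R_1 − R_2) − R_2)/R_2). Then for every ρ with 0 < ρ ≤ R_1ρ_0/(2 + ω + α), it holds that (A_1R_1ρ_0/ρ³)·(R_1ρ_0/ρ − 2 − ω)·exp(−R_1ρ_0/ρ) + (A_2R_2ρ_0/ρ³)·(R_2ρ_0/ρ − 2 − ω)·exp(−R_2ρ_0/ρ) ≥ 0. -/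
/-!
With `x = ρ₀/ρ` and `b = 2 + ω`, `h''(ρ) = (ρ₀/ρ³)·(A₁R₁(R₁x − b)e^{−R₁x} + A₂R₂(R₂x − b)e^{−R₂x})`.
Only the second term can be negative, and after multiplying by `e^{R₁x}` its size is
`A₂R₂·(b − R₂x)e^{(R₁−R₂)x}`. The function `t ↦ (b − kt)e^{ct}` is bounded by its critical value
`(k/c)e^{bc/k − 1}` (a rescaling of `s + 1 ≤ eˢ`), and `α` is exactly this bound divided by
`A₁R₁`, so the density bound `b + α ≤ R₁x` makes the first term dominate.
-/

open Real

/-- The constant `α` of the density bound, with `b` standing for `2 + ω`. -/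
noncomputable def jwlAlpha (A1 A2 b R1 R2 : ℝ) : ℝ :=
  A2 * R2 ^ 2 / (A1 * R1 * (R1 - R2)) * exp ((b * (R1 - R2) - R2) / R2)

theorem sub_mul_mul_exp_mul_le (b k c t : ℝ) (hk : 0 < k) (hc : 0 < c) :
    (b - k * t) * exp (c * t) ≤ k / c * exp ((b * c - k) / k) := by
  set s := (b * c - k) / k - c * t
  have hlin : b - k * t = k / c * (s + 1) := by
    simp only [s]
    field_simp
    ring
  calc (b - k * t) * exp (c * t) = k / c * (s + 1) * exp (c * t) := by rw [hlin]
    _ ≤ k / c * exp s * exp (c * t) := by gcongr; exact add_one_le_exp s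
    _ = k / c * exp ((b * c - k) / k) := by rw [mul_assoc, ← exp_add, sub_add_cancel]

theorem jwl_two_exp_sum_nonneg (A1 A2 b R1 R2 x : ℝ) (hA1 : 0 < A1) (hA2 : 0 ≤ A2)
    (hR1 : 0 < R1) (hR2 : 0 < R2) (hR : R2 < R1) (hx : b + jwlAlpha A1 A2 b R1 R2 ≤ R1 * x) :
    0 ≤ A1 * R1 * (R1 * x - b) * exp (-(R1 * x)) + A2 * R2 * (R2 * x - b) * exp (-(R2 * x)) := by
  have hc : 0 < R1 - R2 := sub_pos.2 hR
  have hdom : A2 * R2 * (b - R2 * x) * exp ((R1 - R2) * x) ≤ A1 * R1 * (R1 * x - b) :=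
    calc A2 * R2 * (b - R2 * x) * exp ((R1 - R2) * x)
        = A2 * R2 * ((b - R2 * x) * exp ((R1 - R2) * x)) := by ring
      _ ≤ A2 * R2 * (R2 / (R1 - R2) * exp ((b * (R1 - R2) - R2) / R2)) := by
          have := sub_mul_mul_exp_mul_le b R2 (R1 - R2) x hR2 hc
          gcongr
      _ = A1 * R1 * jwlAlpha A1 A2 b R1 R2 := by
          unfold jwlAlpha
          field_simp
      _ ≤ A1 * R1 * (R1 * x - b) := by gcongr; linarith
  have hexp : exp (-(R2 * x)) = exp ((R1 - R2) * x) * exp (-(R1 * x)) := by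
    rw [← exp_add]
    ring_nf
  calc (0 : ℝ)
      ≤ (A1 * R1 * (R1 * x - b) - A2 * R2 * (b - R2 * x) * exp ((R1 - R2) * x)) * exp (-(R1 * x)) :=
        mul_nonneg (sub_nonneg.2 hdom) (exp_pos _).le
    _ = _ := by rw [hexp]; ring

/-- Convexity of the JWL reference function at moderate densities: for
`0 < ρ ≤ R_1ρ_0/(2 + ω + α)`, the second derivative `h''(ρ)` of the JWL
reference function is nonnegative. -/
theorem jwl_h_second_deriv_nonneg
    (A1 A2 ω R1 R2 ρ0 : ℝ)
    (hA1 : 0 < A1) (hA2 : 0 < A2) (hω : 0 < ω)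
    (hR1 : 0 < R1) (hR2 : 0 < R2) (hρ0 : 0 < ρ0) (hR : R2 < R1) :
    ∀ ρ : ℝ, 0 < ρ →
      ρ ≤ R1 * ρ0 / (2 + ω +
        A2 * R2 ^ 2 / (A1 * R1 * (R1 - R2)) *
          Real.exp (((2 + ω) * (R1 - R2) - R2) / R2)) →
      0 ≤ A1 * R1 * ρ0 / ρ ^ 3 * (R1 * ρ0 / ρ - 2 - ω) *
            Real.exp (-(R1 * ρ0 / ρ))
        + A2 * R2 * ρ0 / ρ ^ 3 * (R2 * ρ0 / ρ - 2 - ω) *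
            Real.exp (-(R2 * ρ0 / ρ)) := by
  intro ρ hρ hρle
  have hα : 0 ≤ jwlAlpha A1 A2 (2 + ω) R1 R2 := by
    have : 0 < R1 - R2 := sub_pos.2 hR
    unfold jwlAlpha
    positivity
  have hx : 2 + ω + jwlAlpha A1 A2 (2 + ω) R1 R2 ≤ R1 * (ρ0 / ρ) := by
    rw [← mul_div_assoc, ← le_div_comm₀ hρ (by positivity)]
    exact hρle
  have hsum := jwl_two_exp_sum_nonneg A1 A2 (2 + ω) R1 R2 (ρ0 / ρ) hA1 hA2.le hR1 hR2 hR hx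
  have hcoef : 0 ≤ ρ0 / ρ ^ 3 := by positivity
  simp only [mul_div_assoc]
  linear_combination mul_nonneg hcoef hsum
end
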